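/- arXiv:1210.2456 — 3 statements merged into one kernel-verified Lean document; each statement's English description precedes it below -/
import Mathlib

section
/- For every KAT expression e, the set of all partial derivatives of e by all words, Δ̂_{(At·Σ)*}(e) = ∪_{x ∈ (At·Σ)*} Δ̂_x(e), is a finite set. -/
namespace KAT

variable {T A : Type} [DecidableEq A]

/-- Atoms: truth assignments to the primitive tests. -/
abbrev Atom (T : Type) := T → Bool

/-- A guarded string `α₁p₁α₂p₂⋯p_{n-1}αₙ`, as the list of (atom, action)
pairs together with the final atom. -/
structure GStr (T A : Type) where
  pairs : List (Atom T × A)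
  last : Atom T

/-- The first atom of a guarded string. -/
def GStr.first (x : GStr T A) : Atom T :=
  match x.pairs with
  | [] => x.last
  | (α, _) :: _ => α

/-- Fusion product on sets of guarded strings. -/
def fprod (X Y : Set (GStr T A)) : Set (GStr T A) :=
  {z | ∃ x ∈ X, ∃ y ∈ Y, x.last = y.first ∧ z = ⟨x.pairs ++ y.pairs, y.last⟩}

/-- The set of atoms, viewed as guarded strings. -/
def atomsGS : Set (GStr T A) := {z | z.pairs = []}

/-- Fusion powers: `X⁰ = At`, `X^{n+1} = X ⋄ Xⁿ`. -/
def fpow (X : Set (GStr T A)) : ℕ → Set (GStr T A)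
  | 0 => atomsGS
  | n + 1 => fprod X (fpow X n)

/-- `X* = ∪ₙ Xⁿ`. -/
def fstar (X : Set (GStr T A)) : Set (GStr T A) := ⋃ n, fpow X n

/-- Derivative of a set of guarded strings w.r.t. `αp`. -/
def gderiv (α : Atom T) (p : A) (R : Set (GStr T A)) : Set (GStr T A) :=
  {y | (⟨(α, p) :: y.pairs, y.last⟩ : GStr T A) ∈ R}

/-- Boolean expressions over primitive tests `T`. -/
inductive BExp (T : Type) where
  | zero | one
  | test (t : T)
  | not (b : BExp T)
  | or (b₁ b₂ : BExp T)
  | and (b₁ b₂ : BExp T)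

/-- Evaluation of a Boolean expression at an atom (`α ≤ b`). -/
def BExp.eval (α : Atom T) : BExp T → Bool
  | .zero => false
  | .one => true
  | .test t => α t
  | .not b => !(b.eval α)
  | .or b₁ b₂ => b₁.eval α || b₂.eval α
  | .and b₁ b₂ => b₁.eval α && b₂.eval α

/-- KAT expressions over actions `Σ = A` and tests `T`. -/
inductive KExp (T A : Type) where
  | act (p : A)
  | test (b : BExp T)
  | plus (e₁ e₂ : KExp T A)
  | cat (e₁ e₂ : KExp T A)
  | star (e : KExp T A)

/-- Guarded-string semantics of a KAT expression. -/
def gs : KExp T A → Set (GStr T A)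
  | .act p => {z | ∃ α β, z = ⟨[(α, p)], β⟩}
  | .test b => {z | z.pairs = [] ∧ b.eval z.last = true}
  | .plus e₁ e₂ => gs e₁ ∪ gs e₂
  | .cat e₁ e₂ => fprod (gs e₁) (gs e₂)
  | .star e => fstar (gs e)

/-- Syntactic evaluation `E_α`. -/
def Eps (α : Atom T) : KExp T A → Bool
  | .act _ => false
  | .test b => b.eval α
  | .plus e₁ e₂ => Eps α e₁ || Eps α e₂
  | .cat e₁ e₂ => Eps α e₁ && Eps α e₂
  | .star _ => true

/-- `Γ · e`, with `Γ·0 = ∅` and `Γ·1 = Γ`. -/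
def prodSet (Γ : Set (KExp T A)) : KExp T A → Set (KExp T A)
  | .test .zero => ∅
  | .test .one => Γ
  | e => {x | ∃ e' ∈ Γ, x = .cat e' e}

/-- Partial derivatives `Δ_{αp}(e)`. -/
def pd (α : Atom T) (p : A) : KExp T A → Set (KExp T A)
  | .act p' => if p = p' then {.test .one} else ∅
  | .test _ => ∅
  | .plus e₁ e₂ => pd α p e₁ ∪ pd α p e₂
  | .cat e₁ e₂ => prodSet (pd α p e₁) e₂ ∪ (if Eps α e₁ then pd α p e₂ else ∅)
  | .star e => prodSet (pd α p e) (.star e)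

/-- Guarded-string semantics of a set of expressions. -/
def gsSet (E : Set (KExp T A)) : Set (GStr T A) := ⋃ e ∈ E, gs e

/-- Partial derivative of a set of expressions. -/
def pdS (α : Atom T) (p : A) (E : Set (KExp T A)) : Set (KExp T A) :=
  ⋃ e ∈ E, pd α p e

/-- Iterated partial derivative `Δ̂_w(e)` along a word `w ∈ (At·Σ)*`. -/
def pdWord (w : List (Atom T × A)) (e : KExp T A) : Set (KExp T A) :=
  w.foldl (fun E x => pdS x.1 x.2 E) {e}

/-- The closure `PD(e)`. -/
def PD : KExp T A → Set (KExp T A)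
  | .test b => {.test b}
  | .act p => {.act p, .test .one}
  | .plus e₁ e₂ => {.plus e₁ e₂} ∪ PD e₁ ∪ PD e₂
  | .cat e₁ e₂ => {.cat e₁ e₂} ∪ prodSet (PD e₁) e₂ ∪ PD e₂
  | .star e => {.star e} ∪ prodSet (PD e) (.star e)

/-- Number of symbols in the syntactic tree of a Boolean expression. -/
def BExp.size : BExp T → ℕ
  | .zero => 1 | .one => 1 | .test _ => 1
  | .not b => b.size + 1
  | .or b₁ b₂ => b₁.size + b₂.size + 1
  | .and b₁ b₂ => b₁.size + b₂.size + 1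

/-- Number of symbols in the syntactic tree of a KAT expression. -/
def KExp.size : KExp T A → ℕ
  | .act _ => 1
  | .test b => b.size
  | .plus e₁ e₂ => e₁.size + e₂.size + 1
  | .cat e₁ e₂ => e₁.size + e₂.size + 1
  | .star e => e.size + 1

/-- A set of assumptions `Γ`: equations `b p b̄' = 0` and inequalities `c ≤ c'`. -/
structure Gamma (T A : Type) where
  eqns : List (BExp T × A × BExp T)
  ineqs : List (BExp T × BExp T)

/-- `α ∈ At^Γ`. -/
def inAtG (G : Gamma T A) (α : Atom T) : Bool :=
  G.ineqs.all fun cc => !(cc.1.eval α) || cc.2.eval α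

/-- The atoms of `At^Γ`, viewed as guarded strings. -/
def atomsG (G : Gamma T A) : Set (GStr T A) := {z | z.pairs = [] ∧ inAtG G z.last = true}

/-- Γ-restricted fusion powers (base case `At^Γ`). -/
def fpowG (G : Gamma T A) (X : Set (GStr T A)) : ℕ → Set (GStr T A)
  | 0 => atomsG G
  | n + 1 => fprod X (fpowG G X n)

def fstarG (G : Gamma T A) (X : Set (GStr T A)) : Set (GStr T A) := ⋃ n, fpowG G X n

/-- The Γ-restricted guarded-string semantics `GS^Γ`. -/
def gsG (G : Gamma T A) : KExp T A → Set (GStr T A)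
  | .act p => {z | ∃ α β, inAtG G α = true ∧ inAtG G β = true ∧
      (∀ x ∈ G.eqns, x.2.1 = p → x.1.eval α = true → x.2.2.eval β = true) ∧
      z = ⟨[(α, p)], β⟩}
  | .test b => {z | z.pairs = [] ∧ inAtG G z.last = true ∧ b.eval z.last = true}
  | .plus e₁ e₂ => gsG G e₁ ∪ gsG G e₂
  | .cat e₁ e₂ => fprod (gsG G e₁) (gsG G e₂)
  | .star e => fstarG G (gsG G e)

def gsSetG (G : Gamma T A) (E : Set (KExp T A)) : Set (GStr T A) := ⋃ e ∈ E, gsG G e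

/-- Sum of a list of KAT expressions. -/
def sumList (l : List (KExp T A)) : KExp T A := l.foldr .plus (.test .zero)

/-- The universal expression `u = (p₁ + ⋯ + p_k)*`. -/
def uExp (ps : List A) : KExp T A := .star (sumList (ps.map .act))

/-- `r = Σᵢ bᵢpᵢb̄ᵢ' + Σⱼ cⱼc̄ⱼ'`. -/
def rExp (G : Gamma T A) : KExp T A :=
  sumList
    (G.eqns.map (fun x => .cat (.cat (.test x.1) (.act x.2.1)) (.test (.not x.2.2))) ++
     G.ineqs.map (fun x => .cat (.test x.1) (.test (.not x.2))))

/-- The expression `u r u`. -/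
def uru (G : Gamma T A) (ps : List A) : KExp T A :=
  .cat (.cat (uExp ps) (rExp G)) (uExp ps)

/-- `Π{b' | (b p b̄' = 0) ∈ Γ, α ≤ b}` (equal to `1` if there are none). -/
def gammaProd (G : Gamma T A) (α : Atom T) (p : A) : BExp T :=
  ((G.eqns.filter fun x => decide (x.2.1 = p) && x.1.eval α).map fun x => x.2.2).foldr .and .one

def pdGaux (G : Gamma T A) (α : Atom T) (p : A) : KExp T A → Set (KExp T A)
  | .act p' => if p = p' then {.test (gammaProd G α p)} else ∅
  | .test _ => ∅
  | .plus e₁ e₂ => pdGaux G α p e₁ ∪ pdGaux G α p e₂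
  | .cat e₁ e₂ => prodSet (pdGaux G α p e₁) e₂ ∪ (if Eps α e₁ then pdGaux G α p e₂ else ∅)
  | .star e => prodSet (pdGaux G α p e) (.star e)

/-- The Γ-partial derivative `Δ^Γ_{αp}(e)`. -/
def pdG (G : Gamma T A) (α : Atom T) (p : A) (e : KExp T A) : Set (KExp T A) :=
  if inAtG G α then pdGaux G α p e else ∅

/-- The atoms occurring in a guarded string. -/
def atomsOf (x : GStr T A) : List (Atom T) := x.pairs.map Prod.fst ++ [x.last]

/-- The substrings `α p β` of a guarded string. -/
def triplesOf (x : GStr T A) : List (Atom T × A × Atom T) :=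
  List.zipWith (fun ap β => (ap.1, ap.2, β)) x.pairs
    ((x.pairs.map Prod.fst).drop 1 ++ [x.last])

/-- `Γ·e` on transition pairs, with `Γ·0 = ∅` and `Γ·1 = Γ`. -/
def prodPairs (Γ : Set ((Atom T × A) × KExp T A)) :
    KExp T A → Set ((Atom T × A) × KExp T A)
  | .test .zero => ∅
  | .test .one => Γ
  | e => {x | ∃ y ∈ Γ, x = (y.1, .cat y.2 e)}

/-- The transition function `𝖿`. -/
def fset : KExp T A → Set ((Atom T × A) × KExp T A)
  | .act p => {x | ∃ α : Atom T, x = ((α, p), .test .one)}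
  | .test _ => ∅
  | .plus e₁ e₂ => fset e₁ ∪ fset e₂
  | .cat e₁ e₂ => prodPairs (fset e₁) e₂ ∪ {x ∈ fset e₂ | Eps x.1.1 e₁ = true}
  | .star e => prodPairs (fset e) (.star e)

/-- `der_{αp}(e) = {e' | (αp, e') ∈ 𝖿(e)}`. -/
def der (α : Atom T) (p : A) (e : KExp T A) : Set (KExp T A) :=
  {e' | ((α, p), e') ∈ fset e}

end KAT

/-! Every iterated partial derivative of `e` lies in `PD(e)`, because `PD(e)` contains `e` and is
closed under every `Δ_{αp}`; and `PD(e)` is finite by structural induction. Closure reduces to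
one observation: if `Γ` is closed, then `Δ_{αp}(Γ · f) ⊆ Γ · f ∪ Δ_{αp}(f)`. -/

namespace KAT

variable {T A : Type}

lemma prodSet_mono {Γ Γ' : Set (KExp T A)} (h : Γ ⊆ Γ') (e : KExp T A) :
    prodSet Γ e ⊆ prodSet Γ' e := by
  cases e with
  | test b =>
    cases b
    case zero => exact Set.empty_subset _
    case one => exact h
    all_goals exact fun _ ⟨e', he', hx⟩ => ⟨e', h he', hx⟩
  | _ => exact fun _ ⟨e', he', hx⟩ => ⟨e', h he', hx⟩

lemma eq_one_and_mem_or_eq_cat_of_mem_prodSet {Γ : Set (KExp T A)} {e x : KExp T A}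
    (hx : x ∈ prodSet Γ e) : (e = .test .one ∧ x ∈ Γ) ∨ ∃ e' ∈ Γ, x = .cat e' e := by
  cases e with
  | test b => cases b <;> simp_all [prodSet]
  | _ => exact Or.inr hx

lemma prodSet_finite {Γ : Set (KExp T A)} (h : Γ.Finite) (e : KExp T A) :
    (prodSet Γ e).Finite := by
  refine (h.union (h.image (KExp.cat · e))).subset fun x hx => ?_
  rcases eq_one_and_mem_or_eq_cat_of_mem_prodSet hx with ⟨-, hx⟩ | ⟨e', he', rfl⟩
  · exact Or.inl hx
  · exact Or.inr ⟨e', he', rfl⟩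

lemma PD_finite (e : KExp T A) : (PD e).Finite := by
  induction e with
  | act p => exact (Set.finite_singleton _).insert _
  | test b => exact Set.finite_singleton _
  | plus e₁ e₂ ih₁ ih₂ => exact ((Set.finite_singleton _).union ih₁).union ih₂
  | cat e₁ e₂ ih₁ ih₂ => exact ((Set.finite_singleton _).union (prodSet_finite ih₁ e₂)).union ih₂
  | star e ih => exact (Set.finite_singleton _).union (prodSet_finite ih _)

lemma self_mem_PD (e : KExp T A) : e ∈ PD e := by
  cases e <;> simp [PD]

variable [DecidableEq A] (α : Atom T) (p : A)

lemma pd_cat_subset (e f : KExp T A) :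
    pd α p (.cat e f) ⊆ prodSet (pd α p e) f ∪ pd α p f := by
  simp only [pd]
  split
  · exact le_rfl
  · exact Set.union_subset_union_right _ (Set.empty_subset _)

lemma pd_subset_of_mem_prodSet {Γ : Set (KExp T A)} (hΓ : ∀ e ∈ Γ, pd α p e ⊆ Γ)
    {f x : KExp T A} (hx : x ∈ prodSet Γ f) : pd α p x ⊆ prodSet Γ f ∪ pd α p f := by
  rcases eq_one_and_mem_or_eq_cat_of_mem_prodSet hx with ⟨rfl, hx⟩ | ⟨e, he, rfl⟩
  · exact (hΓ x hx).trans Set.subset_union_left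
  · exact (pd_cat_subset α p e f).trans
      (Set.union_subset_union_left _ (prodSet_mono (hΓ e he) f))

lemma pd_subset_PD (e : KExp T A) : ∀ x ∈ PD e, pd α p x ⊆ PD e := by
  induction e with
  | act q =>
    rintro x (rfl | rfl)
    · simp only [pd, PD]
      split
      · exact Set.singleton_subset_iff.2 (Set.mem_insert_of_mem _ rfl)
      · exact Set.empty_subset _
    · exact Set.empty_subset _
  | test b =>
    rintro x rfl
    exact Set.empty_subset _
  | plus e₁ e₂ ih₁ ih₂ =>
    have h₁ : PD e₁ ⊆ PD (.plus e₁ e₂) := Set.subset_union_right.trans Set.subset_union_left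
    have h₂ : PD e₂ ⊆ PD (.plus e₁ e₂) := Set.subset_union_right
    rintro x ((rfl | hx) | hx)
    · exact Set.union_subset ((ih₁ e₁ (self_mem_PD e₁)).trans h₁)
        ((ih₂ e₂ (self_mem_PD e₂)).trans h₂)
    · exact (ih₁ x hx).trans h₁
    · exact (ih₂ x hx).trans h₂
  | cat e₁ e₂ ih₁ ih₂ =>
    have hprod : prodSet (PD e₁) e₂ ⊆ PD (.cat e₁ e₂) :=
      Set.subset_union_right.trans Set.subset_union_left
    have h₂ : PD e₂ ⊆ PD (.cat e₁ e₂) := Set.subset_union_right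
    have hpd₂ : pd α p e₂ ⊆ PD (.cat e₁ e₂) := (ih₂ e₂ (self_mem_PD e₂)).trans h₂
    rintro x ((rfl | hx) | hx)
    · exact (pd_cat_subset α p e₁ e₂).trans
        (Set.union_subset ((prodSet_mono (ih₁ e₁ (self_mem_PD e₁)) e₂).trans hprod) hpd₂)
    · exact (pd_subset_of_mem_prodSet α p ih₁ hx).trans (Set.union_subset hprod hpd₂)
    · exact (ih₂ x hx).trans h₂
  | star e ih =>
    have hstar : pd α p (.star e) ⊆ prodSet (PD e) (.star e) :=
      prodSet_mono (ih e (self_mem_PD e)) _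
    rintro x (rfl | hx)
    · exact hstar.trans Set.subset_union_right
    · exact (pd_subset_of_mem_prodSet α p ih hx).trans
        ((Set.union_subset le_rfl hstar).trans Set.subset_union_right)

variable {α p}

lemma foldl_pdS_subset {S : Set (KExp T A)} (hS : ∀ x : Atom T × A, ∀ e ∈ S, pd x.1 x.2 e ⊆ S)
    (w : List (Atom T × A)) {E : Set (KExp T A)} (hE : E ⊆ S) :
    w.foldl (fun E x => pdS x.1 x.2 E) E ⊆ S := by
  induction w generalizing E with
  | nil => exact hE
  | cons x w ih => exact ih (Set.iUnion₂_subset fun e he => hS x e (hE he))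

lemma pdWord_subset_PD (w : List (Atom T × A)) (e : KExp T A) : pdWord w e ⊆ PD e :=
  foldl_pdS_subset (fun x => pd_subset_PD x.1 x.2 e) w
    (Set.singleton_subset_iff.2 (self_mem_PD e))

end KAT

open KAT in
/-- The set of all partial derivatives of `e` by all words is finite. -/
theorem finite_pdWord_union {T A : Type} [DecidableEq A] (e : KExp T A) :
    (⋃ x : List (Atom T × A), pdWord x e).Finite :=
  (PD_finite e).subset (Set.iUnion_subset fun w => pdWord_subset_PD w e)
end

section
/- For sets of guarded strings X ⊆ GS and n ≥ 0, with X⁰ = At and X^{n+1} = X ⋄ Xⁿ, the derivative of the n-fold fusion power satisfies: for αp ∈ At·Σ, D_{αp}(∪_{n≥0} Xⁿ) = D_{αp}(X) ⋄ (∪_{n≥0} Xⁿ). -/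
/-! Deriving a fusion product by `αp` either derives the left factor, or, when the left factor
contains the bare atom `α`, the right one: `D(X ⋄ Y) = D(X) ⋄ Y ∪ [α ∈ X] D(Y)`. Since `D(At) = ∅`,
induction on `n` gives `D(Xⁿ) ⊆ D(X) ⋄ X*`, and conversely `D(X) ⋄ Xⁿ ⊆ D(Xⁿ⁺¹)`. -/

namespace KAT

variable {T A : Type}

@[simp]
theorem mem_gderiv {α : Atom T} {p : A} {R : Set (GStr T A)} {y : GStr T A} :
    y ∈ gderiv α p R ↔ (⟨(α, p) :: y.pairs, y.last⟩ : GStr T A) ∈ R :=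
  Iff.rfl

theorem gderiv_mono (α : Atom T) (p : A) {R S : Set (GStr T A)} (h : R ⊆ S) :
    gderiv α p R ⊆ gderiv α p S :=
  fun _ hy => h hy

theorem gderiv_iUnion {ι : Sort*} (α : Atom T) (p : A) (R : ι → Set (GStr T A)) :
    gderiv α p (⋃ i, R i) = ⋃ i, gderiv α p (R i) := by
  ext y
  simp only [mem_gderiv, Set.mem_iUnion]

theorem gderiv_atomsGS (α : Atom T) (p : A) : gderiv α p (atomsGS : Set (GStr T A)) = ∅ := by
  ext y
  simp [atomsGS]

theorem fprod_mono_right (X : Set (GStr T A)) {Y Y' : Set (GStr T A)} (h : Y ⊆ Y') :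
    fprod X Y ⊆ fprod X Y' := by
  rintro z ⟨x, hx, y, hy, hxy, rfl⟩
  exact ⟨x, hx, y, h hy, hxy, rfl⟩

theorem fprod_iUnion_right {ι : Sort*} (X : Set (GStr T A)) (Y : ι → Set (GStr T A)) :
    fprod X (⋃ i, Y i) = ⋃ i, fprod X (Y i) := by
  ext z
  simp only [fprod, Set.mem_ofPred_eq, Set.mem_iUnion]
  constructor
  · rintro ⟨x, hx, y, ⟨i, hy⟩, hxy, rfl⟩
    exact ⟨i, x, hx, y, hy, hxy, rfl⟩
  · rintro ⟨i, x, hx, y, hy, hxy, rfl⟩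
    exact ⟨x, hx, y, ⟨i, hy⟩, hxy, rfl⟩

theorem gderiv_fprod (α : Atom T) (p : A) (X Y : Set (GStr T A)) :
    gderiv α p (fprod X Y) =
      fprod (gderiv α p X) Y ∪ {y | (⟨[], α⟩ : GStr T A) ∈ X ∧ y ∈ gderiv α p Y} := by
  ext y
  simp only [mem_gderiv, fprod, Set.mem_union, Set.mem_ofPred_eq]
  constructor
  · rintro ⟨x, hx, z, hz, hxz, hy⟩
    obtain ⟨hpairs, hlast⟩ := GStr.mk.inj hy
    rcases x with ⟨_ | ⟨⟨β, q⟩, t⟩, γ⟩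
    · rcases z with ⟨zs, zl⟩
      obtain rfl : zs = (α, p) :: y.pairs := (List.nil_append zs).symm.trans hpairs.symm
      obtain rfl : γ = α := hxz
      exact Or.inr ⟨hx, hlast ▸ hz⟩
    · left
      obtain ⟨⟨rfl, rfl⟩, hyt⟩ : (α = β ∧ p = q) ∧ y.pairs = t ++ z.pairs := by simpa using hpairs
      exact ⟨⟨t, γ⟩, hx, z, hz, hxz, by rw [← hyt, ← hlast]⟩
  · rintro (⟨x, hx, z, hz, hxz, rfl⟩ | ⟨hα, hy⟩)
    · exact ⟨_, hx, z, hz, hxz, rfl⟩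
    · exact ⟨⟨[], α⟩, hα, _, hy, rfl, rfl⟩

end KAT

open KAT in
/-- `D_{αp}(∪ₙ Xⁿ) = D_{αp}(X) ⋄ (∪ₙ Xⁿ)`. -/
theorem gderiv_fstar {T A : Type} (X : Set (GStr T A)) (α : Atom T) (p : A) :
    gderiv α p (⋃ n, fpow X n) = fprod (gderiv α p X) (⋃ n, fpow X n) := by
  apply Set.Subset.antisymm
  · rw [gderiv_iUnion]
    refine Set.iUnion_subset fun n => ?_
    induction n with
    | zero => simp [fpow, gderiv_atomsGS]
    | succ n ih =>
      rw [fpow, gderiv_fprod]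
      exact Set.union_subset (fprod_mono_right _ (Set.subset_iUnion _ n)) fun y hy => ih hy.2
  · rw [fprod_iUnion_right]
    refine Set.iUnion_subset fun n => ?_
    calc fprod (gderiv α p X) (fpow X n) ⊆ gderiv α p (fpow X (n + 1)) := by
          rw [fpow, gderiv_fprod]
          exact Set.subset_union_left
      _ ⊆ gderiv α p (⋃ n, fpow X n) := gderiv_mono α p (Set.subset_iUnion _ _)
end

section
/- Let Γ be a set of assumptions of the form {b₁p₁b̄₁'=0, ..., b_mp_mb̄_m'=0} ∪ {c₁ ≤ c₁', ..., cₙ ≤ cₙ'}. For KAT expressions e₁, e₂: the implication (all assumptions in Γ) → e₁ = e₂ holds in the guarded-string model (equivalently, is a theorem of KAT) if and only if GS^Γ(e₁) = GS^Γ(e₂). -/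
/-! `GS^Γ(e)` is `GS(e)` cut down to the Γ-consistent guarded strings, since a fusion product is
consistent exactly when both factors are. As `u` denotes every guarded string, `GS(uru)` consists
of the strings with a factor in `GS(r)`, i.e. an atom outside `At^Γ` or a step `αpβ` forbidden by
some `bpb̄' = 0`: these are exactly the inconsistent strings. So `GS(e₁ + uru) = GS(e₂ + uru)`
says that `GS(e₁)` and `GS(e₂)` agree on consistent strings. -/

theorem Set.union_compl_eq_union_compl_iff {α : Type*} {s t c : Set α} :
    s ∪ cᶜ = t ∪ cᶜ ↔ s ∩ c = t ∩ c := by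
  simp only [Set.ext_iff, Set.mem_union, Set.mem_inter_iff, Set.mem_compl_iff]
  exact forall_congr' fun x => by by_cases hx : x ∈ c <;> simp [hx]

namespace KAT

variable {T A : Type}

def Allowed (G : Gamma T A) (α : Atom T) (p : A) (β : Atom T) : Prop :=
  ∀ x ∈ G.eqns, x.2.1 = p → x.1.eval α = true → x.2.2.eval β = true

def PairsConsistent (G : Gamma T A) : List (Atom T × A) → Atom T → Prop
  | [], β => inAtG G β = true
  | (α, p) :: l, β =>
      inAtG G α = true ∧ Allowed G α p (GStr.first ⟨l, β⟩) ∧ PairsConsistent G l β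

/-- `GS^Γ(u)`: the guarded strings over `At^Γ` all of whose steps are allowed. -/
def consistent (G : Gamma T A) : Set (GStr T A) := {x | PairsConsistent G x.pairs x.last}

theorem first_mk_append (l₁ l₂ : List (Atom T × A)) (β : Atom T) :
    (⟨l₁ ++ l₂, β⟩ : GStr T A).first = (⟨l₁, (⟨l₂, β⟩ : GStr T A).first⟩ : GStr T A).first := by
  rcases l₁ with _ | ⟨⟨α, p⟩, l₁⟩ <;> rfl

theorem pairsConsistent_append (G : Gamma T A) (l₁ l₂ : List (Atom T × A)) (β : Atom T) :
    PairsConsistent G (l₁ ++ l₂) β ↔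
      PairsConsistent G l₁ (⟨l₂, β⟩ : GStr T A).first ∧ PairsConsistent G l₂ β := by
  induction l₁ with
  | nil => rcases l₂ with _ | ⟨⟨α, p⟩, l₂⟩ <;> simp [PairsConsistent, GStr.first]
  | cons a l₁ ih =>
    obtain ⟨α, p⟩ := a
    simp only [List.cons_append, PairsConsistent, first_mk_append, ih, and_assoc]

theorem fuse_mem_consistent_iff (G : Gamma T A) {x y : GStr T A} (h : x.last = y.first) :
    ⟨x.pairs ++ y.pairs, y.last⟩ ∈ consistent G ↔ x ∈ consistent G ∧ y ∈ consistent G := by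
  simp only [consistent, Set.mem_ofPred_eq, pairsConsistent_append, ← h]

theorem fprod_inter_consistent (G : Gamma T A) (X Y : Set (GStr T A)) :
    fprod (X ∩ consistent G) (Y ∩ consistent G) = fprod X Y ∩ consistent G := by
  ext z
  constructor
  · rintro ⟨x, ⟨hx, hcx⟩, y, ⟨hy, hcy⟩, h, rfl⟩
    exact ⟨⟨x, hx, y, hy, h, rfl⟩, (fuse_mem_consistent_iff G h).2 ⟨hcx, hcy⟩⟩
  · rintro ⟨⟨x, hx, y, hy, h, rfl⟩, hc⟩
    obtain ⟨hcx, hcy⟩ := (fuse_mem_consistent_iff G h).1 hc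
    exact ⟨x, ⟨hx, hcx⟩, y, ⟨hy, hcy⟩, h, rfl⟩

theorem atomsG_eq_inter_consistent (G : Gamma T A) :
    atomsG G = atomsGS ∩ consistent G := by
  ext ⟨l, β⟩
  rcases l with _ | _ <;> simp [atomsG, atomsGS, consistent, PairsConsistent]

theorem fpowG_inter_consistent (G : Gamma T A) (X : Set (GStr T A)) (n : ℕ) :
    fpowG G (X ∩ consistent G) n = fpow X n ∩ consistent G := by
  induction n with
  | zero => exact atomsG_eq_inter_consistent G
  | succ n ih => rw [fpowG, fpow, ih, fprod_inter_consistent]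

theorem gsG_eq_inter_consistent (G : Gamma T A) (e : KExp T A) :
    gsG G e = gs e ∩ consistent G := by
  induction e with
  | act p =>
    ext z
    simp only [gsG, gs, consistent, Set.mem_ofPred_eq, Set.mem_inter_iff]
    constructor
    · rintro ⟨α, β, hα, hβ, hαβ, rfl⟩
      exact ⟨⟨α, β, rfl⟩, hα, hαβ, hβ⟩
    · rintro ⟨⟨α, β, rfl⟩, hα, hαβ, hβ⟩
      exact ⟨α, β, hα, hβ, hαβ, rfl⟩
  | test b =>
    ext ⟨l, β⟩
    rcases l with _ | _ <;> simp [gsG, gs, consistent, PairsConsistent, and_comm]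
  | plus e₁ e₂ ih₁ ih₂ => rw [gsG, gs, ih₁, ih₂, Set.union_inter_distrib_right]
  | cat e₁ e₂ ih₁ ih₂ => rw [gsG, gs, ih₁, ih₂, fprod_inter_consistent]
  | star e ih =>
    simp only [gsG, gs, ih, fstarG, fstar, fpowG_inter_consistent, Set.iUnion_inter]

theorem inAtG_eq_false_iff (G : Gamma T A) (γ : Atom T) :
    inAtG G γ = false ↔ ∃ c ∈ G.ineqs, c.1.eval γ = true ∧ c.2.eval γ = false := by
  simp [inAtG]

theorem not_allowed_iff (G : Gamma T A) (α : Atom T) (p : A) (β : Atom T) :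
    ¬ Allowed G α p β ↔
      ∃ x ∈ G.eqns, x.2.1 = p ∧ x.1.eval α = true ∧ x.2.2.eval β = false := by
  simp [Allowed]

theorem mem_gs_sumList (l : List (KExp T A)) (x : GStr T A) :
    x ∈ gs (sumList l) ↔ ∃ e ∈ l, x ∈ gs e := by
  induction l with
  | nil => simp [sumList, gs, BExp.eval]
  | cons e l ih => simp [sumList, gs, ← ih]

theorem gs_uExp {ps : List A} (hps : ∀ p : A, p ∈ ps) :
    gs (uExp ps) = (Set.univ : Set (GStr T A)) := by
  have mem_fpow : ∀ (l : List (Atom T × A)) (β : Atom T),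
      (⟨l, β⟩ : GStr T A) ∈ fpow (gs (sumList (ps.map .act))) l.length := by
    intro l β
    induction l with
    | nil => rfl
    | cons a l ih =>
      obtain ⟨α, p⟩ := a
      refine ⟨⟨[(α, p)], (⟨l, β⟩ : GStr T A).first⟩, ?_, ⟨l, β⟩, ih, rfl, rfl⟩
      exact (mem_gs_sumList _ _).2 ⟨.act p, List.mem_map_of_mem (hps p), α, _, rfl⟩
  exact Set.eq_univ_of_forall fun ⟨l, β⟩ => Set.mem_iUnion.2 ⟨l.length, mem_fpow l β⟩

theorem mem_gs_test_act_test (b c : BExp T) (p : A) (x : GStr T A) :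
    x ∈ gs (.cat (.cat (.test b) (.act p)) (.test c)) ↔
      ∃ α β, b.eval α = true ∧ c.eval β = true ∧ x = ⟨[(α, p)], β⟩ := by
  constructor
  · rintro ⟨-, ⟨⟨_, γ⟩, ⟨rfl, hb⟩, -, ⟨α, β, rfl⟩, rfl, rfl⟩, ⟨_, δ⟩, ⟨rfl, hc⟩, rfl, rfl⟩
    exact ⟨_, _, hb, hc, rfl⟩
  · rintro ⟨α, β, hb, hc, rfl⟩
    exact ⟨⟨[(α, p)], β⟩, ⟨⟨[], α⟩, ⟨rfl, hb⟩, _, ⟨α, β, rfl⟩, rfl, rfl⟩,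
      ⟨[], β⟩, ⟨rfl, hc⟩, rfl, rfl⟩

theorem mem_gs_test_test (b c : BExp T) (x : GStr T A) :
    x ∈ gs (.cat (.test b) (.test c)) ↔
      x.pairs = [] ∧ b.eval x.last = true ∧ c.eval x.last = true := by
  constructor
  · rintro ⟨⟨_, γ⟩, ⟨rfl, hb⟩, ⟨_, δ⟩, ⟨rfl, hc⟩, rfl, rfl⟩
    exact ⟨rfl, hb, hc⟩
  · rintro ⟨h, hb, hc⟩
    obtain ⟨_, γ⟩ := x
    subst h
    exact ⟨⟨[], γ⟩, ⟨rfl, hb⟩, ⟨[], γ⟩, ⟨rfl, hc⟩, rfl, rfl⟩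

theorem mem_gs_rExp (G : Gamma T A) (x : GStr T A) :
    x ∈ gs (rExp G) ↔
      (∃ α p β, ¬ Allowed G α p β ∧ x = ⟨[(α, p)], β⟩) ∨
      ∃ γ, inAtG G γ = false ∧ x = ⟨[], γ⟩ := by
  simp only [rExp, mem_gs_sumList, List.mem_append, List.mem_map, not_allowed_iff,
    inAtG_eq_false_iff]
  constructor
  · rintro ⟨e, ⟨t, ht, rfl⟩ | ⟨c, hc, rfl⟩, hx⟩
    · obtain ⟨α, β, hb, hb', rfl⟩ := (mem_gs_test_act_test _ _ _ _).1 hx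
      exact Or.inl ⟨α, t.2.1, β, ⟨t, ht, rfl, hb, by simpa [BExp.eval] using hb'⟩, rfl⟩
    · obtain ⟨hx, hc₁, hc₂⟩ := (mem_gs_test_test _ _ _).1 hx
      obtain ⟨_, γ⟩ := x
      subst hx
      exact Or.inr ⟨γ, ⟨c, hc, hc₁, by simpa [BExp.eval] using hc₂⟩, rfl⟩
  · rintro (⟨α, p, β, ⟨t, ht, rfl, hb, hb'⟩, rfl⟩ | ⟨γ, ⟨c, hc, hc₁, hc₂⟩, rfl⟩)
    · refine ⟨_, Or.inl ⟨t, ht, rfl⟩, (mem_gs_test_act_test _ _ _ _).2 ?_⟩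
      exact ⟨α, β, hb, by simp [BExp.eval, hb'], rfl⟩
    · refine ⟨_, Or.inr ⟨c, hc, rfl⟩, (mem_gs_test_test _ _ _).2 ?_⟩
      exact ⟨rfl, hc₁, by simp [BExp.eval, hc₂]⟩

theorem gs_rExp_inter_consistent (G : Gamma T A) : gs (rExp G) ∩ consistent G = ∅ := by
  refine Set.eq_empty_of_forall_notMem ?_
  rintro x ⟨hx, hc⟩
  rcases (mem_gs_rExp G x).1 hx with ⟨α, p, β, hαβ, rfl⟩ | ⟨γ, hγ, rfl⟩
  · exact hαβ hc.2.1
  · exact Bool.false_ne_true (hγ ▸ hc)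

theorem exists_mem_gs_rExp_of_not_pairsConsistent (G : Gamma T A) :
    ∀ (l : List (Atom T × A)) (β : Atom T), ¬ PairsConsistent G l β →
      ∃ l₁ l₂, ∃ m ∈ gs (rExp G),
        l = l₁ ++ m.pairs ++ l₂ ∧ m.last = (⟨l₂, β⟩ : GStr T A).first
  | [], β, h =>
    ⟨[], [], ⟨[], β⟩, (mem_gs_rExp G _).2 (.inr ⟨β, by simpa [PairsConsistent] using h, rfl⟩),
      rfl, rfl⟩
  | (α, p) :: l, β, h => by
    by_cases hα : inAtG G α = true
    · by_cases hαp : Allowed G α p (GStr.first ⟨l, β⟩)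
      · obtain ⟨l₁, l₂, m, hm, rfl, hlast⟩ :=
          exists_mem_gs_rExp_of_not_pairsConsistent G l β fun hl => h ⟨hα, hαp, hl⟩
        exact ⟨(α, p) :: l₁, l₂, m, hm, rfl, hlast⟩
      · exact ⟨[], l, ⟨[(α, p)], _⟩, (mem_gs_rExp G _).2 (.inl ⟨α, p, _, hαp, rfl⟩), rfl, rfl⟩
    · exact ⟨[], (α, p) :: l, ⟨[], α⟩,
        (mem_gs_rExp G _).2 (.inr ⟨α, by simpa using hα, rfl⟩), rfl, rfl⟩

theorem gs_uru {ps : List A} (hps : ∀ p : A, p ∈ ps) (G : Gamma T A) :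
    gs (uru G ps) = (consistent G)ᶜ := by
  have huru : gs (uru G ps) = fprod (fprod Set.univ (gs (rExp G))) Set.univ := by
    simp only [uru, gs, gs_uExp hps]
  rw [huru]
  apply Set.Subset.antisymm
  · intro z hz hc
    have hz' : z ∈ fprod (fprod (Set.univ ∩ consistent G) (gs (rExp G) ∩ consistent G))
        (Set.univ ∩ consistent G) := by
      rw [fprod_inter_consistent, fprod_inter_consistent]
      exact ⟨hz, hc⟩
    obtain ⟨-, ⟨-, -, m, hm, -⟩, -⟩ := hz'
    simp [gs_rExp_inter_consistent] at hm
  · intro z hz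
    obtain ⟨l₁, l₂, m, hm, hz, hlast⟩ :=
      exists_mem_gs_rExp_of_not_pairsConsistent G z.pairs z.last hz
    refine ⟨⟨l₁ ++ m.pairs, m.last⟩, ⟨⟨l₁, m.first⟩, trivial, m, hm, rfl, rfl⟩,
      ⟨l₂, z.last⟩, trivial, hlast, ?_⟩
    rw [← hz]

end KAT

open KAT in
theorem gs_plus_uru_eq_iff_gsG_eq_general {T A : Type}
    (G : Gamma T A) (ps : List A) (hps : ∀ p : A, p ∈ ps) (e₁ e₂ : KExp T A) :
    gs (.plus e₁ (uru G ps)) = gs (.plus e₂ (uru G ps)) ↔ gsG G e₁ = gsG G e₂ := by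
  simp only [gs, gs_uru hps, gsG_eq_inter_consistent]
  exact Set.union_compl_eq_union_compl_iff

open KAT in
/-- `KAT, Γ ⊢ e₁ = e₂` (equivalently, `e₁ + uru = e₂ + uru` in the
guarded-string model) iff `GS^Γ(e₁) = GS^Γ(e₂)`. -/
theorem gs_plus_uru_eq_iff_gsG_eq {T A : Type} [DecidableEq A]
    (G : Gamma T A) (ps : List A) (hps : ∀ p : A, p ∈ ps) (e₁ e₂ : KExp T A) :
    gs (.plus e₁ (uru G ps)) = gs (.plus e₂ (uru G ps)) ↔ gsG G e₁ = gsG G e₂ :=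
  gs_plus_uru_eq_iff_gsG_eq_general G ps hps e₁ e₂
end
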